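/- The matrix B = I - 2Z_d + Z is positive semidefinite when W is symmetric, row stochastic with nonnegative off-diagonal entries satisfying w_{ii} ≥ 1/2 for all i. -/

import Mathlib

/-!
`B = A ⊗ₖ 1` with `A = 1 - 2 diag(W) + W`. Writing `W' = W - diag(W)`, stochasticity gives
`A = diag(row sums of W') + W'`, the signless Laplacian of the weighted graph `W'`, whose
quadratic form is `½ ∑ᵢⱼ W'ᵢⱼ (xᵢ + xⱼ)² ≥ 0`. A Kronecker product of positive semidefinite
matrices is positive semidefinite.
-/

open Matrix
open scoped Kronecker

namespace Matrix

variable {ι : Type*} [Fintype ι] [DecidableEq ι]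

lemma two_mul_dotProduct_diagonal_rowSum_add_mulVec {R : Type*} [CommRing R]
    {A : Matrix ι ι R} (hA : A.IsSymm) (x : ι → R) :
    2 * (x ⬝ᵥ ((diagonal (fun i => ∑ j, A i j) + A) *ᵥ x)) =
      ∑ i, ∑ j, A i j * (x i + x j) ^ 2 := by
  have hdiag : x ⬝ᵥ (diagonal (fun i => ∑ j, A i j) *ᵥ x) = ∑ i, ∑ j, A i j * x i ^ 2 := by
    simp only [dotProduct, mulVec_diagonal, Finset.sum_mul, Finset.mul_sum]
    exact Fintype.sum_congr _ _ fun i => Fintype.sum_congr _ _ fun j => by ring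
  have hoff : x ⬝ᵥ (A *ᵥ x) = ∑ i, ∑ j, A i j * x i * x j := by
    simp only [dotProduct, mulVec, Finset.mul_sum]
    exact Fintype.sum_congr _ _ fun i => Fintype.sum_congr _ _ fun j => by ring
  have hswap : ∑ i, ∑ j, A i j * x j ^ 2 = ∑ i, ∑ j, A i j * x i ^ 2 := by
    rw [Finset.sum_comm]
    simp_rw [hA.apply]
  have hsq : ∑ i, ∑ j, A i j * (x i + x j) ^ 2 =
      ∑ i, ∑ j, A i j * x i ^ 2 + 2 * ∑ i, ∑ j, A i j * x i * x j +
        ∑ i, ∑ j, A i j * x j ^ 2 := by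
    simp only [Finset.mul_sum, ← Finset.sum_add_distrib]
    exact Fintype.sum_congr _ _ fun i => Fintype.sum_congr _ _ fun j => by ring
  rw [add_mulVec, dotProduct_add, hdiag, hoff, hsq, hswap]
  ring

theorem posSemidef_diagonal_rowSum_add {A : Matrix ι ι ℝ} (hA : A.IsSymm)
    (hA₀ : ∀ i j, 0 ≤ A i j) : (diagonal (fun i => ∑ j, A i j) + A).PosSemidef := by
  refine .of_dotProduct_mulVec_nonneg ((isHermitian_diagonal _).add
    (isHermitian_iff_isSymm.mpr hA)) fun x => ?_
  have hform := two_mul_dotProduct_diagonal_rowSum_add_mulVec hA x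
  have hsum : 0 ≤ ∑ i, ∑ j, A i j * (x i + x j) ^ 2 :=
    Finset.sum_nonneg fun i _ => Finset.sum_nonneg fun j _ => mul_nonneg (hA₀ i j) (sq_nonneg _)
  rw [star_trivial]
  linarith

theorem posSemidef_one_sub_two_smul_diagonal_add {W : Matrix ι ι ℝ} (hW : W.IsSymm)
    (hW₀ : ∀ i j, 0 ≤ W i j) (hrow : ∀ i, ∑ j, W i j = 1) :
    (1 - (2 : ℝ) • diagonal (fun i => W i i) + W).PosSemidef := by
  set W' := W - diagonal (fun i => W i i)
  have hrow' : (fun i => ∑ j, W' i j) = fun i => 1 - W i i := funext fun i => by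
    simp [W', Finset.sum_sub_distrib, diagonal_apply, hrow]
  have hW'₀ : ∀ i j, 0 ≤ W' i j := fun i j => by
    by_cases h : i = j <;> simp [W', h, hW₀]
  have hsplit : 1 - (2 : ℝ) • diagonal (fun i => W i i) + W =
      diagonal (fun i => 1 - W i i) + W' := by
    ext i j
    rcases eq_or_ne i j with rfl | h
    · simp [W']
      ring
    · simp [W', h]
  rw [hsplit, ← hrow']
  exact posSemidef_diagonal_rowSum_add (hW.sub (isSymm_diagonal _)) hW'₀

end Matrix

theorem B_posSemidef_general
    (n p : ℕ) (W : Matrix (Fin n) (Fin n) ℝ)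
    (hWsymm : W.IsSymm) (hWrow : ∀ i, ∑ j, W i j = 1) (hWnonneg : ∀ i j, 0 ≤ W i j) :
    let Z : Matrix (Fin n × Fin p) (Fin n × Fin p) ℝ := W ⊗ₖ (1 : Matrix (Fin p) (Fin p) ℝ)
    let Zd : Matrix (Fin n × Fin p) (Fin n × Fin p) ℝ :=
      (Matrix.diagonal fun i => W i i) ⊗ₖ (1 : Matrix (Fin p) (Fin p) ℝ)
    ((1 : Matrix (Fin n × Fin p) (Fin n × Fin p) ℝ) - (2 : ℝ) • Zd + Z).PosSemidef := by
  intro Z Zd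
  have hB : 1 - (2 : ℝ) • Zd + Z =
      (1 - (2 : ℝ) • diagonal (fun i => W i i) + W) ⊗ₖ (1 : Matrix (Fin p) (Fin p) ℝ) := by
    simp only [Z, Zd, sub_eq_add_neg, ← neg_smul, add_kronecker, smul_kronecker,
      one_kronecker_one]
  rw [hB]
  exact (posSemidef_one_sub_two_smul_diagonal_add hWsymm hWnonneg hWrow).kronecker .one

/-- The matrix `B = I - 2Z_d + Z` is positive semidefinite when `W` is
symmetric, row stochastic with nonnegative entries and `w_{ii} ≥ 1/2` for all `i`. -/
theorem B_posSemidef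
    (n p : ℕ) (W : Matrix (Fin n) (Fin n) ℝ)
    (hWsymm : W.IsSymm) (hWrow : ∀ i, ∑ j, W i j = 1) (hWnonneg : ∀ i j, 0 ≤ W i j)
    (hWdiag : ∀ i, (1 : ℝ) / 2 ≤ W i i) :
    let Z : Matrix (Fin n × Fin p) (Fin n × Fin p) ℝ := W ⊗ₖ (1 : Matrix (Fin p) (Fin p) ℝ)
    let Zd : Matrix (Fin n × Fin p) (Fin n × Fin p) ℝ :=
      (Matrix.diagonal fun i => W i i) ⊗ₖ (1 : Matrix (Fin p) (Fin p) ℝ)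
    ((1 : Matrix (Fin n × Fin p) (Fin n × Fin p) ℝ) - (2 : ℝ) • Zd + Z).PosSemidef :=
  B_posSemidef_general n p W hWsymm hWrow hWnonneg
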